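/- arXiv:2003.00625 — 2 statements merged into one kernel-verified Lean document; each statement's English description precedes it below -/
import Mathlib

section
/- For a tiered graph G with two tiers (possibly disconnected) and its dual graph G', and for any two vertices u < v of G, the vertices u and v lie in the same connected component of G if and only if they lie in the same connected component of G'. -/
open Finset

attribute [local instance 10] Classical.propDecidable

noncomputable section

/-- An edge of a simple graph on `ℕ`, stored as an ordered pair `(u,v)` with `u < v` intended. -/
abbrev PEdge : Type := ℕ × ℕ

/-- A labelled edge (for multigraphs): an endpoint pair together with a label. -/
abbrev LEdge : Type := (ℕ × ℕ) × ℕ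

def adjP (E : Finset PEdge) (u v : ℕ) : Prop := (u, v) ∈ E ∨ (v, u) ∈ E

def reachP (E : Finset PEdge) : ℕ → ℕ → Prop := Relation.ReflTransGen (adjP E)

def connP (V : Finset ℕ) (E : Finset PEdge) : Prop :=
  (∀ e ∈ E, e.1 ∈ V ∧ e.2 ∈ V) ∧ ∀ u ∈ V, ∀ v ∈ V, reachP E u v

def IsTreeOn (V : Finset ℕ) (E : Finset PEdge) : Prop := connP V E ∧ E.card + 1 = V.card

/-- A graph on a finite set of naturals together with a tiering map. -/
structure PreGraph where
  V : Finset ℕ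
  E : Finset PEdge
  t : ℕ → ℕ

/-- `G` is a tiered graph with two tiers. -/
def IsTiered (G : PreGraph) : Prop :=
  (∀ v ∈ G.V, 0 < v) ∧
  (∀ e ∈ G.E, e.1 ∈ G.V ∧ e.2 ∈ G.V ∧ e.1 < e.2) ∧
  (∀ v ∈ G.V, G.t v = 1 ∨ G.t v = 2) ∧
  (∀ e ∈ G.E, G.t e.1 < G.t e.2)

/-- acyclicity: every edge is a bridge. -/
def IsForest (G : PreGraph) : Prop := ∀ e ∈ G.E, ¬ reachP (G.E.erase e) e.1 e.2

def IsTreeG (G : PreGraph) : Prop := IsTreeOn G.V G.E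

/-- the connected component (vertex set) of `x`. -/
def comp (V : Finset ℕ) (E : Finset PEdge) (x : ℕ) : Finset ℕ :=
  V.filter fun y => reachP E x y

/-- the order-reversing involution `x_i ↦ x_{s+1-i}` of a finite set `V = {x_1 < ... < x_s}`. -/
def flipMap (V : Finset ℕ) (x : ℕ) : ℕ :=
  if hx : x ∈ V then
    ((V.orderIsoOfFin rfl)
      ⟨V.card - 1 - ((V.orderIsoOfFin rfl).symm ⟨x, hx⟩).1, by
        have h := ((V.orderIsoOfFin rfl).symm ⟨x, hx⟩).isLt; omega⟩).1
  else x

/-- the dual of a (connected) tiered graph, via the global vertex ordering. -/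
def dual (G : PreGraph) : PreGraph where
  V := G.V
  E := G.E.image fun e => (flipMap G.V e.2, flipMap G.V e.1)
  t := fun x => if x ∈ G.V then 3 - G.t (flipMap G.V x) else G.t x

/-- the componentwise dual of a (possibly disconnected) tiered graph. -/
def cdual (G : PreGraph) : PreGraph where
  V := G.V
  E := G.E.image fun e => (flipMap (comp G.V G.E e.1) e.2, flipMap (comp G.V G.E e.1) e.1)
  t := fun x => if x ∈ G.V then 3 - G.t (flipMap (comp G.V G.E x) x) else G.t x

/-- the recursive weight of a tiered tree (fuel-based implementation; the recursion
depth is bounded by the number of vertices). -/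
def weightAux : ℕ → PreGraph → ℕ
  | 0, _ => 0
  | fuel + 1, T =>
    if h : 2 ≤ T.V.card then
      let v := T.V.min' (Finset.card_pos.mp (by omega))
      let V' := T.V.erase v
      let E' := T.E.filter fun e => e.1 ≠ v ∧ e.2 ≠ v
      ∑ u ∈ V'.filter (fun u => adjP T.E v u),
        (((comp V' E' u).filter fun y => y < u ∧ T.t v < T.t y).card
          + weightAux fuel ⟨comp V' E' u, E'.filter fun e => e.1 ∈ comp V' E' u, T.t⟩)
    else 0

def weight (T : PreGraph) : ℕ := weightAux T.V.card T

/-- edges of a complete tiered graph with tier 1 vertex set `A` and tier 2 vertex set `B`. -/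
def ctE2 (A B : Finset ℕ) : Finset PEdge := (A ×ˢ B).filter fun e => e.1 < e.2

/-- the edge set of the complete tiered graph determined by a two-tier tiered graph `G`. -/
def ctE (G : PreGraph) : Finset PEdge :=
  ctE2 (G.V.filter fun v => G.t v = 1) (G.V.filter fun v => G.t v = 2)

/-- edge set of the complete tiered graph on `[n]` determined by a tiering map `t`. -/
def ctEM (n : ℕ) (t : ℕ → ℕ) : Finset PEdge :=
  (Finset.Icc 1 n ×ˢ Finset.Icc 1 n).filter fun e => e.1 < e.2 ∧ t e.1 < t e.2

def extActiveP (T : Finset PEdge) (ω : PEdge → ℝ) (e : PEdge) : Prop :=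
  e ∉ T ∧ reachP T e.1 e.2 ∧ ∀ e' ∈ T, ¬ reachP (T.erase e') e.1 e.2 → ω e < ω e'

/-- external activity of the spanning forest `T` in the graph with edge set `E`. -/
def eaP (E T : Finset PEdge) (ω : PEdge → ℝ) : ℕ := (E.filter (extActiveP T ω)).card

def adjL (E : Finset LEdge) (u v : ℕ) : Prop := ∃ e ∈ E, e.1 = (u, v) ∨ e.1 = (v, u)
def reachL (E : Finset LEdge) : ℕ → ℕ → Prop := Relation.ReflTransGen (adjL E)
def connL (V : Finset ℕ) (E : Finset LEdge) : Prop := ∀ u ∈ V, ∀ v ∈ V, reachL E u v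
def IsLTree (V : Finset ℕ) (T : Finset LEdge) : Prop := connL V T ∧ T.card + 1 = V.card

def extActiveL (T : Finset LEdge) (ω : LEdge → ℝ) (e : LEdge) : Prop :=
  e ∉ T ∧ reachL T e.1.1 e.1.2 ∧ ∀ e' ∈ T, ¬ reachL (T.erase e') e.1.1 e.1.2 → ω e < ω e'

def eaL (E T : Finset LEdge) (ω : LEdge → ℝ) : ℕ := (E.filter (extActiveL T ω)).card

def omega1 (N : ℕ) (e : PEdge) : ℝ := (e.1 : ℝ) + (e.2 : ℝ) / (N : ℝ)
def omega2 (N : ℕ) (e : PEdge) : ℝ := ((N + 1 - e.2 : ℕ) : ℝ) + ((N + 1 - e.1 : ℕ) : ℝ) / (N : ℝ)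
def omegaLex (n : ℕ) (e : PEdge) : ℝ := ((e.1 * (n + 1) + e.2 : ℕ) : ℝ)

/-- representative (minimum) of the component of `x` in the forest `F` on vertex set `V`. -/
def rep (V : Finset ℕ) (F : Finset LEdge) (x : ℕ) : ℕ :=
  if hx : x ∈ V then
    (V.filter fun y => reachL F x y).min'
      ⟨x, Finset.mem_filter.mpr ⟨hx, Relation.ReflTransGen.refl⟩⟩
  else x

/-- image of an edge in the quotient graph `G • F`; the label encodes the original edge. -/
def quotEdge (ρ : ℕ → ℕ) (e : LEdge) : LEdge :=
  ((ρ e.1.1, ρ e.1.2), Nat.pair (Nat.pair e.1.1 e.1.2) e.2)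

/-- recover the original edge from a quotient edge. -/
def decodeE (e : LEdge) : LEdge :=
  (((Nat.unpair (Nat.unpair e.2).1).1, (Nat.unpair (Nat.unpair e.2).1).2), (Nat.unpair e.2).2)

/-- tiering map on `[n]` induced by `f : Fin n → Fin m` (tiers `1,...,m`). -/
def tf (n m : ℕ) (f : Fin n → Fin m) : ℕ → ℕ := fun v =>
  if h : v ∈ Finset.Icc 1 n then
    (f ⟨v - 1, by have := Finset.mem_Icc.mp h; omega⟩).1 + 1
  else 0

/-- `G` is a tiered graph with `m` tiers. -/
def IsTieredM (m : ℕ) (G : PreGraph) : Prop :=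
  (∀ e ∈ G.E, e.1 ∈ G.V ∧ e.2 ∈ G.V ∧ e.1 < e.2) ∧
  (∀ v ∈ G.V, G.t v ∈ Finset.Icc 1 m) ∧
  (∀ e ∈ G.E, G.t e.1 < G.t e.2) ∧
  (∀ i ∈ Finset.Icc 1 m, ∃ v ∈ G.V, G.t v = i)

/-- weight polynomial `P_p(q)` (recursive weight), evaluated at `q`. -/
def Pw (n m : ℕ) (p : ℕ → ℕ) (q : ℤ) : ℤ :=
  ∑ f : Fin n → Fin m,
    ∑ E ∈ ((Finset.Icc 1 n ×ˢ Finset.Icc 1 n).powerset.filter fun E =>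
        IsTreeG ⟨Finset.Icc 1 n, E, tf n m f⟩ ∧ IsTieredM m ⟨Finset.Icc 1 n, E, tf n m f⟩ ∧
        ∀ i ∈ Finset.Icc 1 m, ((Finset.Icc 1 n).filter fun v => tf n m f v = i).card = p i),
      q ^ weight ⟨Finset.Icc 1 n, E, tf n m f⟩

/-- weight polynomial `P_p(q)` with the weight of a tiered tree given by its external
activity in the complete tiered graph it determines (lexicographic edge order). -/
def PwEA (n m : ℕ) (p : ℕ → ℕ) (q : ℤ) : ℤ :=
  ∑ f : Fin n → Fin m,
    ∑ E ∈ ((Finset.Icc 1 n ×ˢ Finset.Icc 1 n).powerset.filter fun E =>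
        IsTreeG ⟨Finset.Icc 1 n, E, tf n m f⟩ ∧ IsTieredM m ⟨Finset.Icc 1 n, E, tf n m f⟩ ∧
        ∀ i ∈ Finset.Icc 1 m, ((Finset.Icc 1 n).filter fun v => tf n m f v = i).card = p i),
      q ^ eaP (ctEM n (tf n m f)) E (omegaLex n)

/-- `T^c_G(y)`: the Tutte evaluation `T_G(1,y)` (spanning tree expansion) for a connected
graph, `0` otherwise. -/
def TcP (V : Finset ℕ) (E : Finset PEdge) (ω : PEdge → ℝ) (y : ℤ) : ℤ :=
  if connP V E then ∑ T ∈ E.powerset.filter (fun T => IsTreeOn V T), y ^ eaP E T ω else 0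

/-- edge multiset of `H ∪ Q_S`: `H`-edges (labels `≠ 0`) together with the complete
tiered graph on `U` with tier-1 set `S` (labelled `0`). -/
def qE (U : Finset ℕ) (EH : Finset LEdge) (S : Finset ℕ) : Finset LEdge :=
  EH ∪ (ctE2 S (U \ S)).image fun p => (p, 0)

/-- `(S,T) ↦ (S*, T*)`: the dual quasi-tiered tree. -/
def dualTree (U : Finset ℕ) (ST : Finset ℕ × Finset LEdge) : Finset ℕ × Finset LEdge :=
  (U.filter fun v =>
      (cdual ⟨U, (ST.2.filter fun e => e.2 = 0).image Prod.fst,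
        fun w => if w ∈ ST.1 then 1 else 2⟩).t v = 1,
   (ST.2.filter fun e => e.2 ≠ 0) ∪
     (cdual ⟨U, (ST.2.filter fun e => e.2 = 0).image Prod.fst,
        fun w => if w ∈ ST.1 then 1 else 2⟩).E.image fun p => (p, 0))

/-- tiered forests on `U` with tier sizes `(p1, p2)` (tier map normalised off `U`). -/
def ForestSet (U : Finset ℕ) (p1 p2 : ℕ) : Set PreGraph :=
  {F | F.V = U ∧ IsTiered F ∧ IsForest F ∧
    (U.filter fun v => F.t v = 1).card = p1 ∧
    (U.filter fun v => F.t v = 2).card = p2 ∧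
    ∀ v, v ∉ U → F.t v = 0}

/-
Each component `C` of `G` is mapped onto itself by its order-reversing involution `flipMap C`,
and the dual edges inside `C` are exactly the images of the edges of `G` inside `C` under
`flipMap C`. Hence every dual edge joins two vertices of one component of `G`, and conversely a
path of `G` between `flipMap C u` and `flipMap C v` is carried to a dual path between `u` and `v`.
-/

instance (E : Finset PEdge) : Std.Symm (adjP E) := ⟨fun _ _ => Or.symm⟩

lemma reachP_symm {E : Finset PEdge} {a b : ℕ} (h : reachP E a b) : reachP E b a :=
  Std.Symm.symm (r := Relation.ReflTransGen (adjP E)) a b h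

section comp

variable {V : Finset ℕ} {E : Finset PEdge} {x y z : ℕ}

lemma mem_comp : y ∈ comp V E x ↔ y ∈ V ∧ reachP E x y := mem_filter

lemma mem_comp_self (hx : x ∈ V) : x ∈ comp V E x := mem_comp.2 ⟨hx, .refl⟩

lemma comp_eq_of_reachP (h : reachP E x y) : comp V E x = comp V E y := by
  ext z
  simp only [mem_comp, and_congr_right_iff]
  exact fun _ => ⟨(reachP_symm h).trans, h.trans⟩

lemma reachP_of_mem_comp (hy : y ∈ comp V E x) (hz : z ∈ comp V E x) : reachP E y z :=
  (reachP_symm (mem_comp.1 hy).2).trans (mem_comp.1 hz).2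

end comp

section flipMap

variable {V : Finset ℕ} {x : ℕ}

lemma flipMap_of_mem (hx : x ∈ V) :
    flipMap V x = V.orderIsoOfFin rfl ((V.orderIsoOfFin rfl).symm ⟨x, hx⟩).rev := by
  rw [flipMap, dif_pos hx]
  congr 2
  exact Fin.ext (by simp only [Fin.val_rev]; omega)

lemma flipMap_mem (hx : x ∈ V) : flipMap V x ∈ V := by
  rw [flipMap_of_mem hx]
  exact Subtype.prop _

lemma flipMap_flipMap (hx : x ∈ V) : flipMap V (flipMap V x) = x := by
  rw [flipMap_of_mem (flipMap_mem hx)]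
  simp only [flipMap_of_mem hx, Subtype.coe_eta, OrderIso.symm_apply_apply, Fin.rev_rev,
    OrderIso.apply_symm_apply]

end flipMap

section cdual

variable {G : PreGraph} {a b : ℕ}

lemma adjP_cdual_flipMap (h : adjP G.E a b) :
    adjP (cdual G).E (flipMap (comp G.V G.E a) a) (flipMap (comp G.V G.E a) b) := by
  rcases h with hab | hba
  · exact .inr (mem_image_of_mem _ hab)
  · rw [comp_eq_of_reachP (V := G.V) (.single (.inr hba) : reachP G.E a b)]
    exact .inl (mem_image_of_mem _ hba)

lemma reachP_cdual_flipMap (h : reachP G.E a b) :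
    reachP (cdual G).E (flipMap (comp G.V G.E a) a) (flipMap (comp G.V G.E a) b) := by
  induction h with
  | refl => exact .refl
  | tail hab hbc ih =>
    refine ih.tail ?_
    rw [comp_eq_of_reachP hab]
    exact adjP_cdual_flipMap hbc

lemma reachP_cdual_of_reachP (ha : a ∈ G.V) (hb : b ∈ G.V) (h : reachP G.E a b) :
    reachP (cdual G).E a b := by
  set C := comp G.V G.E a
  have haC : a ∈ C := mem_comp_self ha
  have hbC : b ∈ C := mem_comp.2 ⟨hb, h⟩
  have hflip := reachP_cdual_flipMap (reachP_of_mem_comp (flipMap_mem haC) (flipMap_mem hbC))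
  rwa [← comp_eq_of_reachP (mem_comp.1 (flipMap_mem haC)).2, flipMap_flipMap haC,
    flipMap_flipMap hbC] at hflip

lemma reachP_of_adjP_cdual (hE : ∀ e ∈ G.E, e.1 ∈ G.V ∧ e.2 ∈ G.V)
    (h : adjP (cdual G).E a b) : reachP G.E a b := by
  suffices ∀ x y, (x, y) ∈ (cdual G).E → reachP G.E x y from
    h.elim (this a b) fun hba => reachP_symm (this b a hba)
  intro x y hxy
  obtain ⟨e, he, hexy⟩ := mem_image.1 hxy
  obtain ⟨rfl, rfl⟩ := Prod.mk.inj hexy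
  have h1 : e.1 ∈ comp G.V G.E e.1 := mem_comp_self (hE e he).1
  have h2 : e.2 ∈ comp G.V G.E e.1 := mem_comp.2 ⟨(hE e he).2, .single (.inl he)⟩
  exact reachP_of_mem_comp (flipMap_mem h2) (flipMap_mem h1)

lemma reachP_of_reachP_cdual (hE : ∀ e ∈ G.E, e.1 ∈ G.V ∧ e.2 ∈ G.V)
    (h : reachP (cdual G).E a b) : reachP G.E a b :=
  Relation.ReflTransGen.lift' id (fun _ _ => reachP_of_adjP_cdual hE) _ _ h

end cdual

theorem stmt4_general (G : PreGraph) (hT : IsTiered G)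
    (u v : ℕ) (hu : u ∈ G.V) (hv : v ∈ G.V) :
    reachP G.E u v ↔ reachP (cdual G).E u v :=
  ⟨reachP_cdual_of_reachP hu hv,
    reachP_of_reachP_cdual fun e he => ⟨(hT.2.1 e he).1, (hT.2.1 e he).2.1⟩⟩

/-- for a (possibly disconnected) tiered graph `G` with two tiers and
its (componentwise) dual `G'`, vertices `u < v` lie in the same component of `G`
iff they lie in the same component of `G'`. -/
theorem stmt4 (G : PreGraph) (hT : IsTiered G)
    (u v : ℕ) (hu : u ∈ G.V) (hv : v ∈ G.V) (huv : u < v) :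
    reachP G.E u v ↔ reachP (cdual G).E u v :=
  stmt4_general G hT u v hu hv

end
end

section
/- Let G be a connected graph with an injective weight function ω: E(G) → ℝ, let T be a spanning tree of G, and suppose E(G) is partitioned into E_1 and E_2 such that ω(e_1) < ω(e_2) for all e_1 ∈ E_1 and e_2 ∈ E_2. Let F be the spanning forest of G with edge set E(T) ∩ E_2. Then the external activity of T in G equals the external activity of T•F in (G⟨E_1⟩)•F plus the external activity of F in G⟨E_2⟩. -/
open Finset

attribute [local instance 10] Classical.propDecidable

noncomputable section

/-! For an edge `e ∈ E₁`, the `F`-edges on its fundamental cycle in `T` are heavier than `e`,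
so they never decide its activity, and contracting them turns that cycle into the fundamental
cycle of `e` in `T • F`. For an edge `e ∈ E₂`, activity forces every edge of its fundamental
cycle to be heavier than `e`, hence to lie in `E₂`, i.e. in `F`: the cycle already lives in `F`.
Reachability in the quotient, whose vertices are the `rep`-representatives of the `F`-components,
is reachability with the edges of `F` added back. -/

def IsForestL (T : Finset LEdge) : Prop := ∀ g ∈ T, ¬ reachL (T.erase g) g.1.1 g.1.2

section Reachability

variable {E S : Finset LEdge} {a b : ℕ}

theorem reachL_refl (E : Finset LEdge) (a : ℕ) : reachL E a a := Relation.ReflTransGen.refl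

theorem reachL_of_mem {g : LEdge} (hg : g ∈ E) : reachL E g.1.1 g.1.2 :=
  Relation.ReflTransGen.single ⟨g, hg, Or.inl rfl⟩

theorem reachL.trans {c : ℕ} (hab : reachL E a b) (hbc : reachL E b c) : reachL E a c :=
  Relation.ReflTransGen.trans hab hbc

theorem reachL.symm (hab : reachL E a b) : reachL E b a := by
  induction hab with
  | refl => exact reachL_refl E a
  | tail _ hcb ih =>
    obtain ⟨g, hg, hgcb⟩ := hcb
    exact (Relation.ReflTransGen.single ⟨g, hg, hgcb.symm⟩).trans ih

theorem reachL.map (σ : ℕ → ℕ) (h : ∀ g ∈ E, reachL S (σ g.1.1) (σ g.1.2))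
    (hab : reachL E a b) : reachL S (σ a) (σ b) := by
  induction hab with
  | refl => exact reachL_refl S _
  | tail _ hcb ih =>
    obtain ⟨⟨⟨u, v⟩, l⟩, hg, huv⟩ := hcb
    have hσ := h _ hg
    simp only [Prod.mk.injEq] at huv
    rcases huv with ⟨rfl, rfl⟩ | ⟨rfl, rfl⟩
    · exact ih.trans hσ
    · exact ih.trans hσ.symm

theorem reachL.of_edges (h : ∀ g ∈ E, reachL S g.1.1 g.1.2) (hab : reachL E a b) :
    reachL S a b :=
  hab.map id h

theorem reachL.mono (hES : E ⊆ S) (hab : reachL E a b) : reachL S a b :=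
  hab.of_edges fun _ hg => reachL_of_mem (hES hg)

theorem reachL.erase_cases (e : LEdge) (hab : reachL E a b) :
    reachL (E.erase e) a b ∨
      (reachL (E.erase e) a e.1.1 ∧ reachL (E.erase e) e.1.2 b) ∨
      (reachL (E.erase e) a e.1.2 ∧ reachL (E.erase e) e.1.1 b) := by
  induction hab with
  | refl => exact Or.inl (reachL_refl _ a)
  | tail _ hcb ih =>
    obtain ⟨g, hg, hgcb⟩ := hcb
    by_cases hge : g = e
    · subst hge
      obtain ⟨⟨u, v⟩, l⟩ := g
      simp only [Prod.mk.injEq] at hgcb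
      rcases hgcb with ⟨rfl, rfl⟩ | ⟨rfl, rfl⟩ <;>
        rcases ih with h | ⟨h, -⟩ | ⟨h, -⟩ <;>
        simp [h, reachL_refl]
    · have hcb : adjL (E.erase e) _ _ := ⟨g, Finset.mem_erase.2 ⟨hge, hg⟩, hgcb⟩
      rcases ih with h | ⟨h₁, h₂⟩ | ⟨h₁, h₂⟩
      · exact Or.inl (h.tail hcb)
      · exact Or.inr (Or.inl ⟨h₁, h₂.tail hcb⟩)
      · exact Or.inr (Or.inr ⟨h₁, h₂.tail hcb⟩)

end Reachability

def contractTo (e : LEdge) (x : ℕ) : ℕ := if x = e.1.2 then e.1.1 else x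

theorem connL.contract {V : Finset ℕ} {E : Finset LEdge} (hc : connL V E) (e : LEdge) :
    connL (V.image (contractTo e)) ((E.erase e).image (quotEdge (contractTo e))) := by
  have hσ : ∀ g ∈ E, reachL ((E.erase e).image (quotEdge (contractTo e)))
      (contractTo e g.1.1) (contractTo e g.1.2) := by
    intro g hg
    by_cases hge : g = e
    · have : contractTo e g.1.1 = contractTo e g.1.2 := by
        simp only [contractTo, hge]; split_ifs <;> simp_all
      rw [this]; exact reachL_refl _ _
    · exact reachL_of_mem (Finset.mem_image_of_mem _ (Finset.mem_erase.2 ⟨hge, hg⟩))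
  simp only [connL, Finset.forall_mem_image]
  exact fun x hx y hy => (hc x hx y hy).map _ hσ

theorem connL.card_le_card_add_one {V : Finset ℕ} {E : Finset LEdge} (hc : connL V E) :
    V.card ≤ E.card + 1 := by
  induction hn : E.card using Nat.strong_induction_on generalizing E V with
  | _ n ih =>
    rcases E.eq_empty_or_nonempty with rfl | ⟨e, he⟩
    · have : V.card ≤ 1 := Finset.card_le_one.2 fun u hu v hv => by
        induction hc u hu v hv with
        | refl => rfl
        | tail _ hcb => obtain ⟨g, hg, -⟩ := hcb; exact absurd hg (Finset.notMem_empty g)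
      omega
    -- contracting `e` loses one vertex and at least one edge
    have hE : ((E.erase e).image (quotEdge (contractTo e))).card < n :=
      hn ▸ Finset.card_image_le.trans_lt (Finset.card_erase_lt_of_mem he)
    have hV : V ⊆ insert e.1.2 (V.image (contractTo e)) := fun x hx => by
      by_cases hxe : x = e.1.2
      · exact hxe ▸ Finset.mem_insert_self _ _
      · exact Finset.mem_insert_of_mem (Finset.mem_image.2 ⟨x, hx, if_neg hxe⟩)
    have := ih _ hE (hc.contract e) rfl
    have := Finset.card_le_card hV
    have := Finset.card_insert_le e.1.2 (V.image (contractTo e))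
    omega

theorem IsLTree.isForestL {V : Finset ℕ} {T : Finset LEdge} (hT : IsLTree V T) : IsForestL T := by
  intro g hg hcycle
  have hc : connL V (T.erase g) := fun x hx y hy =>
    (hT.1 x hx y hy).of_edges fun f hf => by
      by_cases hfg : f = g
      · exact hfg ▸ hcycle
      · exact reachL_of_mem (Finset.mem_erase.2 ⟨hfg, hf⟩)
  have := hc.card_le_card_add_one
  have := Finset.card_erase_add_one hg
  have := hT.2
  omega

namespace IsForestL

variable {T S : Finset LEdge} {a b : ℕ}

theorem reachL_erase (hT : IsForestL T) (hST : S ⊆ T) (hS : reachL S a b) {f : LEdge}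
    (hf : reachL (T.erase f) a b) : reachL (S.erase f) a b := by
  by_cases hfS : f ∈ S
  · have hsub : S.erase f ⊆ T.erase f := Finset.erase_subset_erase f hST
    rcases hS.erase_cases f with h | ⟨h₁, h₂⟩ | ⟨h₁, h₂⟩
    · exact h
    · exact absurd (((h₁.mono hsub).symm.trans hf).trans (h₂.mono hsub).symm) (hT f (hST hfS))
    · exact absurd (((h₂.mono hsub).trans hf.symm).trans (h₁.mono hsub)) (hT f (hST hfS))
  · rwa [Finset.erase_eq_of_notMem hfS]

theorem reachL_sdiff (hT : IsForestL T) (hST : S ⊆ T) (hS : reachL S a b) {D : Finset LEdge}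
    (hD : ∀ f ∈ D, reachL (T.erase f) a b) : reachL (S \ D) a b := by
  induction D using Finset.induction_on with
  | empty => simpa using hS
  | insert f D _ ih =>
    rw [Finset.sdiff_insert]
    exact hT.reachL_erase (Finset.sdiff_subset.trans hST)
      (ih fun g hg => hD g (Finset.mem_insert_of_mem hg)) (hD f (Finset.mem_insert_self f D))

end IsForestL

section Quotient

variable {V : Finset ℕ} {F : Finset LEdge}

theorem reachL_rep (V : Finset ℕ) (F : Finset LEdge) (x : ℕ) : reachL F x (rep V F x) := by
  unfold rep
  split_ifs
  · exact (Finset.mem_filter.1 (Finset.min'_mem _ _)).2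
  · exact reachL_refl F x

theorem rep_eq_of_reachL {x y : ℕ} (hx : x ∈ V) (hy : y ∈ V) (hxy : reachL F x y) :
    rep V F x = rep V F y := by
  have hcomp : (V.filter fun z => reachL F x z) = V.filter fun z => reachL F y z := by
    ext z
    simp only [Finset.mem_filter, and_congr_right_iff]
    exact fun _ => ⟨hxy.symm.trans, hxy.trans⟩
  simp only [rep, dif_pos hx, dif_pos hy, hcomp]

theorem decodeE_quotEdge (ρ : ℕ → ℕ) (e : LEdge) : decodeE (quotEdge ρ e) = e := by
  simp [quotEdge, decodeE]

theorem quotEdge_injective (ρ : ℕ → ℕ) : Function.Injective (quotEdge ρ) :=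
  Function.LeftInverse.injective (decodeE_quotEdge ρ)

theorem reachL_image_quotEdge_rep_iff (hF : ∀ g ∈ F, g.1.1 ∈ V ∧ g.1.2 ∈ V)
    (W : Finset LEdge) (a b : ℕ) :
    reachL (W.image (quotEdge (rep V F))) (rep V F a) (rep V F b) ↔ reachL (W ∪ F) a b := by
  have hrep (x : ℕ) : reachL (W ∪ F) x (rep V F x) :=
    (reachL_rep V F x).mono Finset.subset_union_right
  constructor
  · intro h
    refine ((hrep a).trans ?_).trans (hrep b).symm
    refine h.of_edges fun g hg => ?_
    obtain ⟨g, hgW, rfl⟩ := Finset.mem_image.1 hg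
    exact ((hrep g.1.1).symm.trans (reachL_of_mem (Finset.mem_union_left F hgW))).trans
      (hrep g.1.2)
  · refine fun h => h.map (rep V F) fun g hg => ?_
    rcases Finset.mem_union.1 hg with hgW | hgF
    · exact reachL_of_mem (Finset.mem_image_of_mem _ hgW)
    · rw [rep_eq_of_reachL (hF g hgF).1 (hF g hgF).2 (reachL_of_mem hgF)]
      exact reachL_refl _ _

end Quotient

section Activity

variable {V : Finset ℕ} {E1 E2 T : Finset LEdge} {ω : LEdge → ℝ} {e : LEdge}

theorem extActiveL_iff_extActiveL_quot (hTE : T ⊆ E1 ∪ E2) (hdisj : Disjoint E1 E2)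
    (hsep : ∀ e1 ∈ E1, ∀ e2 ∈ E2, ω e1 < ω e2)
    (hF : ∀ g ∈ T ∩ E2, g.1.1 ∈ V ∧ g.1.2 ∈ V)
    (he : e ∈ E1) :
    extActiveL T ω e ↔ extActiveL ((T ∩ E1).image (quotEdge (rep V (T ∩ E2))))
      (ω ∘ decodeE) (quotEdge (rep V (T ∩ E2)) e) := by
  have hq := quotEdge_injective (rep V (T ∩ E2))
  have hsplit : T ∩ E1 ∪ T ∩ E2 = T := by
    rw [← Finset.inter_union_distrib_left, Finset.inter_eq_left.2 hTE]
  have hreach (W : Finset LEdge) := reachL_image_quotEdge_rep_iff hF W e.1.1 e.1.2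
  have hcut : ∀ f ∈ T ∩ E1,
      reachL (((T ∩ E1).image (quotEdge (rep V (T ∩ E2)))).erase
          (quotEdge (rep V (T ∩ E2)) f)) (rep V (T ∩ E2) e.1.1) (rep V (T ∩ E2) e.1.2) ↔
        reachL (T.erase f) e.1.1 e.1.2 := by
    intro f hf
    have hfE2 : f ∉ T ∩ E2 := fun h =>
      Finset.disjoint_left.1 hdisj (Finset.mem_inter.1 hf).2 (Finset.mem_inter.1 h).2
    rw [← Finset.image_erase hq, hreach, ← Finset.erase_eq_of_notMem hfE2,
      ← Finset.erase_union_distrib, hsplit]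
  unfold extActiveL
  refine and_congr ?_ (and_congr ((hsplit ▸ hreach (T ∩ E1)).symm) ?_)
  · rw [hq.mem_finset_image]
    simp [he]
  · simp only [Finset.forall_mem_image, Function.comp_apply, decodeE_quotEdge]
    constructor
    · exact fun h f hf hcycle => h f (Finset.mem_inter.1 hf).1 ((hcut f hf).not.1 hcycle)
    · intro h f hfT hcycle
      by_cases hfE1 : f ∈ E1
      · have hf : f ∈ T ∩ E1 := Finset.mem_inter.2 ⟨hfT, hfE1⟩
        exact h hf ((hcut f hf).not.2 hcycle)
      · exact hsep e he f ((Finset.mem_union.1 (hTE hfT)).resolve_left hfE1)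

theorem extActiveL_iff_extActiveL_inter (hTE : T ⊆ E1 ∪ E2) (hT : IsForestL T)
    (hsep : ∀ e1 ∈ E1, ∀ e2 ∈ E2, ω e1 < ω e2) (he : e ∈ E2)
    (hTe : reachL T e.1.1 e.1.2) :
    extActiveL T ω e ↔ extActiveL (T ∩ E2) ω e := by
  constructor
  · rintro ⟨heT, -, hact⟩
    have hD : ∀ f ∈ T \ E2, reachL (T.erase f) e.1.1 e.1.2 := by
      intro f hf
      by_contra hcycle
      obtain ⟨hfT, hfE2⟩ := Finset.mem_sdiff.1 hf
      have hfE1 : f ∈ E1 := (Finset.mem_union.1 (hTE hfT)).resolve_right hfE2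
      exact lt_asymm (hact f hfT hcycle) (hsep f hfE1 e he)
    refine ⟨fun h => heT (Finset.mem_inter.1 h).1, ?_, fun f hf hcycle => ?_⟩
    · simpa [Finset.sdiff_sdiff_self_left] using hT.reachL_sdiff subset_rfl hTe hD
    · refine hact f (Finset.mem_inter.1 hf).1 fun h => hcycle ?_
      refine (hT.reachL_sdiff (Finset.erase_subset f T) h hD).mono fun g hg => ?_
      simp only [Finset.mem_sdiff, Finset.mem_erase, Finset.mem_inter] at hg ⊢
      tauto
  · rintro ⟨heF, hF, hact⟩
    refine ⟨fun h => heF (Finset.mem_inter.2 ⟨h, he⟩), hTe, fun f hfT hcycle => ?_⟩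
    have hfF : f ∈ T ∩ E2 := by
      by_contra hfF
      exact hcycle (hF.mono fun g hg =>
        Finset.mem_erase.2 ⟨fun h => hfF (h ▸ hg), Finset.inter_subset_left hg⟩)
    exact hact f hfF fun h => hcycle (h.mono (Finset.erase_subset_erase f Finset.inter_subset_left))

end Activity

theorem stmt8_general (V : Finset ℕ) (E : Finset LEdge) (ω : LEdge → ℝ)
    (hE : ∀ e ∈ E, e.1.1 ∈ V ∧ e.1.2 ∈ V)
    (E1 E2 : Finset LEdge) (hunion : E1 ∪ E2 = E) (hdisj : Disjoint E1 E2)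
    (hsep : ∀ e1 ∈ E1, ∀ e2 ∈ E2, ω e1 < ω e2)
    (T : Finset LEdge) (hTE : T ⊆ E) (hT : IsLTree V T) :
    eaL E T ω =
      eaL (E1.image (quotEdge (rep V (T ∩ E2))))
          ((T ∩ E1).image (quotEdge (rep V (T ∩ E2)))) (ω ∘ decodeE)
        + eaL E2 (T ∩ E2) ω := by
  subst hunion
  have hF : ∀ g ∈ T ∩ E2, g.1.1 ∈ V ∧ g.1.2 ∈ V := fun g hg =>
    hE g (hTE (Finset.inter_subset_left hg))
  unfold eaL
  rw [Finset.filter_union, Finset.card_union_of_disjoint (Finset.disjoint_filter_filter hdisj),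
    Finset.filter_image, Finset.card_image_of_injective _ (quotEdge_injective _)]
  congr 2
  · exact Finset.filter_congr fun e he =>
      extActiveL_iff_extActiveL_quot hTE hdisj hsep hF he
  · refine Finset.filter_congr fun e he =>
      extActiveL_iff_extActiveL_inter hTE hT.isForestL hsep he ?_
    have he' := hE e (Finset.mem_union_right E1 he)
    exact hT.1 _ he'.1 _ he'.2

/-- if the injective weights on `E = E1 ⊎ E2` satisfy `ω(E1) < ω(E2)`,
`T` is a spanning tree of the connected graph `(V,E)` and `F = T ∩ E2`, then
`ea(T) = ea(T•F in G⟨E1⟩•F) + ea(F in G⟨E2⟩)`.  The quotient `•F` is realised by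
mapping each vertex to the minimum of its `F`-component; quotient edges keep their
original edge encoded in the label, and the weight descends via `decodeE`. -/
theorem stmt8 (V : Finset ℕ) (E : Finset LEdge) (ω : LEdge → ℝ)
    (hE : ∀ e ∈ E, e.1.1 ∈ V ∧ e.1.2 ∈ V)
    (hinj : Set.InjOn ω ↑E) (hconn : connL V E)
    (E1 E2 : Finset LEdge) (hunion : E1 ∪ E2 = E) (hdisj : Disjoint E1 E2)
    (hsep : ∀ e1 ∈ E1, ∀ e2 ∈ E2, ω e1 < ω e2)
    (T : Finset LEdge) (hTE : T ⊆ E) (hT : IsLTree V T) :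
    eaL E T ω =
      eaL (E1.image (quotEdge (rep V (T ∩ E2))))
          ((T ∩ E1).image (quotEdge (rep V (T ∩ E2)))) (ω ∘ decodeE)
        + eaL E2 (T ∩ E2) ω :=
  stmt8_general V E ω hE E1 E2 hunion hdisj hsep T hTE hT

end
end
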